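/- arXiv:2309.06522 — 4 statements merged into one kernel-verified Lean document; each statement's English description precedes it below -/
import Mathlib

section
/- Fix a natural number j with 2 ≤ j < ω. Let L = {∼} be the language with one binary relation symbol, and let M be an L-structure with countably infinite domain in which ∼ is an equivalence relation with infinitely many equivalence classes, each of size exactly j. Then M has the externally definable Ramsey property, but M does not have the point-Ramsey property. (Proposition 6.3(1).) -/
open FirstOrder FirstOrder.Language CategoryTheory

universe u v w

namespace EDRP

/-- The colouring `χ` of the copies of `A` in `M` (copies identified with embeddings
`A ↪[L] M`) is externally definable by the formulas `φ i`: there are an elementary extension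
`N ⪰ M` and a parameter tuple `ē` in `N` such that `χ(f(ā)) = i` iff `N ⊨ φ i (ē, f(ā))`. -/
def ExtDefinableBy (L : FirstOrder.Language.{u, v}) (M : Type w) [L.Structure M]
    (A : Type w) [L.Structure A]
    {k e : ℕ} (φ : Fin k → L.Formula (Fin e ⊕ A)) (χ : (A ↪[L] M) → Fin k) : Prop :=
  ∃ (N : Bundled.{w} L.Structure) (emb : M ↪ₑ[L] N) (eb : Fin e → N),
    ∀ (f : A ↪[L] M) (i : Fin k),
      χ f = i ↔ (φ i).Realize (Sum.elim eb fun a => emb (f a))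

/-- `χ` is an externally definable `k`-colouring of the copies of `A` in `M`. -/
def ExtDefinable (L : FirstOrder.Language.{u, v}) (M : Type w) [L.Structure M]
    (A : Type w) [L.Structure A] {k : ℕ} (χ : (A ↪[L] M) → Fin k) : Prop :=
  ∃ (e : ℕ) (φ : Fin k → L.Formula (Fin e ⊕ A)), ExtDefinableBy L M A φ χ

/-- The copy of `B` in `M` given by the embedding `g` is `χ`-monochromatic: `χ` is constant
on the copies of `A` lying inside the image of `g`. -/
def MonochromaticOn (L : FirstOrder.Language.{u, v}) (M : Type w) [L.Structure M]
    (A B : Type w) [L.Structure A] [L.Structure B]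
    {k : ℕ} (χ : (A ↪[L] M) → Fin k) (g : B ↪[L] M) : Prop :=
  ∀ f₁ f₂ : A ↪[L] M, Set.range (f₁ : A → M) ⊆ Set.range (g : B → M) →
    Set.range (f₂ : A → M) ⊆ Set.range (g : B → M) → χ f₁ = χ f₂

/-- `M` has the externally definable `ā`-Ramsey property, where `ā` enumerates `A`:
for every `k ≥ 1`, every `B` in the age of `M` and every externally definable `k`-colouring `χ`
of the copies of `A` in `M`, there is a `χ`-monochromatic copy of `B` in `M`. -/
def ExtDefARamsey (L : FirstOrder.Language.{u, v}) (M : Type w) [L.Structure M]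
    (A : Type w) [L.Structure A] : Prop :=
  ∀ (k : ℕ), 1 ≤ k → ∀ (B : Type w) [L.Structure B], Finite B → Nonempty (B ↪[L] M) →
    ∀ χ : (A ↪[L] M) → Fin k, ExtDefinable L M A χ →
      ∃ g : B ↪[L] M, MonochromaticOn L M A B χ g

/-- `M` has the externally definable Ramsey property. -/
def ExtDefRamsey (L : FirstOrder.Language.{u, v}) (M : Type w) [L.Structure M] : Prop :=
  ∀ (A : Type w) [L.Structure A], Finite A → Nonempty (A ↪[L] M) → ExtDefARamsey L M A

/-- `M` has the point-Ramsey property: for every one-element `A` in the age of `M`, every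
`k ≥ 1`, every `k`-colouring of the copies of `A` in `M` (not necessarily definable) and every
`B` in the age of `M`, there is a monochromatic copy of `B` in `M`. -/
def PointRamsey (L : FirstOrder.Language.{u, v}) (M : Type w) [L.Structure M] : Prop :=
  ∀ (A : Type w) [L.Structure A], Finite A → Nat.card A = 1 → Nonempty (A ↪[L] M) →
    ∀ (k : ℕ), 1 ≤ k → ∀ (B : Type w) [L.Structure B], Finite B → Nonempty (B ↪[L] M) →
      ∀ χ : (A ↪[L] M) → Fin k, ∃ g : B ↪[L] M, MonochromaticOn L M A B χ g

/-- The interpretation in `M` of the unique binary relation symbol of the language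
`Language.graph` consisting of a single binary relation symbol. -/
abbrev simRel (M : Type w) [Language.graph.Structure M] (a b : M) : Prop :=
  Structure.RelMap Language.adj ![a, b]

/-! In any model of the theory of `M` (an equivalence relation with infinitely many classes, all
of size `j`) the finite partial isomorphisms form a back-and-forth system, so tuples with the same
atomic type satisfy the same formulas. Given an externally definable colouring with parameters `ē`
in `N ⪰ M`, only finitely many elements of `M` lie in the `N`-class of a parameter. A copy of `B`
in `M` avoiding their classes is monochromatic: any two copies of `A` inside it have the same
atomic type over `ē`.

Point-Ramsey fails for the colouring of each point by whether it is the chosen representative of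
its class: a copy of a single class of size `j` is a whole class of `M`, so it has both colours. -/

section Graph

variable {M N : Type*} [Language.graph.Structure M] [Language.graph.Structure N]

theorem relMap_adj_iff (x : Fin 2 → M) :
    Structure.RelMap Language.adj x ↔ simRel M (x 0) (x 1) := by
  rw [simRel, show ![x 0, x 1] = x from List.ofFn_inj.mp rfl]

theorem simRel_map_iff (F : M ↪[Language.graph] N) (x y : M) :
    simRel N (F x) (F y) ↔ simRel M x y := by
  have h := F.map_rel Language.adj ![x, y]
  rwa [show F ∘ ![x, y] = ![F x, F y] from List.ofFn_inj.mp rfl] at h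

def embeddingOfSimRelIff (f : M → N) (hf : Function.Injective f)
    (hsim : ∀ x y, simRel N (f x) (f y) ↔ simRel M x y) : M ↪[Language.graph] N where
  toFun := f
  inj' := hf
  map_rel' := by
    rintro _ ⟨⟩ x
    rw [relMap_adj_iff, relMap_adj_iff]
    exact hsim _ _

end Graph

section EquivalenceClasses

variable {N : Type*} [Language.graph.Structure N] {j : ℕ} {s : Set (N × N)}

structure EqvClassesOfCard (j : ℕ) (N : Type*) [Language.graph.Structure N] : Prop where
  equivalence : Equivalence (simRel N)
  card_class : ∀ a, Nat.card {b // simRel N a b} = j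
  exists_not_simRel : ∀ T : Set N, T.Finite → ∃ d, ∀ t ∈ T, ¬ simRel N d t

theorem EqvClassesOfCard.of_infinite_classes (hE : Equivalence (simRel N))
    (hsize : ∀ a, Nat.card {b // simRel N a b} = j)
    (hinfcl : {s : Set N | ∃ a, s = {b | simRel N a b}}.Infinite) : EqvClassesOfCard j N where
  equivalence := hE
  card_class := hsize
  exists_not_simRel T hT := by
    obtain ⟨_, ⟨d, rfl⟩, hd⟩ := (hinfcl.sdiff (hT.image fun t => {b | simRel N t b})).nonempty
    refine ⟨d, fun t ht hdt => hd ⟨t, ht, ?_⟩⟩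
    ext b
    exact ⟨hE.trans hdt, hE.trans (hE.symm hdt)⟩

theorem EqvClassesOfCard.finite_class (h : EqvClassesOfCard j N) (hj : j ≠ 0) (a : N) :
    {b | simRel N a b}.Finite :=
  Set.finite_coe_iff.mp (Nat.finite_of_card_ne_zero (h.card_class a ▸ hj))

theorem EqvClassesOfCard.ncard_class (h : EqvClassesOfCard j N) (a : N) :
    {b | simRel N a b}.ncard = j := by
  rw [← Nat.card_coe_set_eq]
  exact h.card_class a

section Axioms

open BoundedFormula Term

noncomputable def classCardGe (n : ℕ) : Language.graph.Formula (Fin 1) :=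
  Formula.iExs (Fin n)
    ((Formula.iInf fun i => Language.adj.formula₂ (var (Sum.inl 0)) (var (Sum.inr i))) ⊓
      Formula.iInf fun p : {p : Fin n × Fin n // p.1 ≠ p.2} =>
        ∼((var (Sum.inr p.1.1)).equal (var (Sum.inr p.1.2))))

theorem realize_classCardGe {n : ℕ} (v : Fin 1 → N) :
    (classCardGe n).Realize v ↔ n ≤ ENat.card {b // simRel N (v 0) b} := by
  simp only [classCardGe, Formula.realize_iExs, Formula.realize_inf, Formula.realize_iInf,
    Formula.realize_rel₂, Formula.realize_not, Formula.realize_equal, Term.realize_var,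
    Sum.elim_inl, Sum.elim_inr, Subtype.forall]
  constructor
  · rintro ⟨y, hy, hinj⟩
    simpa using ENat.card_le_card_of_injective
      (f := fun i => (⟨y i, hy i⟩ : {b // simRel N (v 0) b}))
      fun a b hab => by_contra fun hne => hinj (a, b) hne (congrArg Subtype.val hab)
  · intro h
    obtain ⟨y, -⟩ := Fin.Embedding.exists_embedding_disjoint_range_of_add_le_ENat_card
      (s := (∅ : Set {b // simRel N (v 0) b})) (by simpa using h)
    exact ⟨fun i => y i, fun i => (y i).2, fun p hp h => hp (y.injective (Subtype.ext h))⟩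

noncomputable def existsNotSimRel (n : ℕ) : Language.graph.Sentence :=
  Formula.iAlls (Fin n) <| ∃' BoundedFormula.iInf fun i =>
    ∼(Language.adj.boundedFormula₂ &0 (var (Sum.inl (Sum.inr i))))

theorem realize_existsNotSimRel {n : ℕ} :
    N ⊨ existsNotSimRel n ↔ ∀ x : Fin n → N, ∃ d, ∀ i, ¬ simRel N d (x i) := by
  simp [existsNotSimRel, Sentence.Realize, Formula.Realize, BoundedFormula.realize_rel₂, Fin.snoc]

noncomputable def classesCardEq (j : ℕ) : Language.graph.Sentence :=
  Formula.iAlls (Fin 1) ((classCardGe j ⊓ ∼(classCardGe (j + 1))).relabel Sum.inr)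

theorem realize_classesCardEq :
    N ⊨ classesCardEq j ↔ ∀ a : N, ENat.card {b // simRel N a b} = j := by
  simp only [classesCardEq, Sentence.Realize, Formula.realize_iAlls, Formula.realize_relabel,
    Formula.realize_inf, Formula.realize_not, realize_classCardGe, Function.comp_apply,
    Sum.elim_inr, Nat.cast_add_one, ENat.add_one_le_iff (ENat.natCast_ne_top j), not_lt,
    ← le_antisymm_iff, eq_comm (a := (j : ℕ∞))]
  exact (Equiv.funUnique (Fin 1) N).forall_congr_left

noncomputable def eqvClassesOfCardTheory (j : ℕ) : Language.graph.Theory :=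
  {Language.adj.reflexive, Language.adj.symmetric, Language.adj.transitive, classesCardEq j} ∪
    Set.range existsNotSimRel

theorem natCard_eq_iff_enatCard_eq {α : Type*} (hj : j ≠ 0) :
    Nat.card α = j ↔ ENat.card α = j := by
  rcases finite_or_infinite α
  · rw [ENat.card_eq_coe_natCard, Nat.cast_inj]
  · simp [hj.symm]

theorem forall_exists_not_simRel_iff :
    (∀ T : Set N, T.Finite → ∃ d, ∀ t ∈ T, ¬ simRel N d t) ↔ ∀ n, N ⊨ existsNotSimRel n := by
  simp only [realize_existsNotSimRel]
  constructor
  · exact fun h n x => by simpa using h _ (Set.finite_range x)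
  · intro h T hT
    obtain ⟨n, x, -, rfl⟩ := hT.fin_param
    simpa using h n x

theorem model_eqvClassesOfCardTheory_iff (hj : j ≠ 0) :
    N ⊨ eqvClassesOfCardTheory j ↔ EqvClassesOfCard j N := by
  simp only [eqvClassesOfCardTheory, Theory.model_union_iff, Theory.model_insert_iff,
    Theory.model_singleton_iff, Relations.realize_reflexive, Relations.realize_symmetric,
    Relations.realize_transitive, realize_classesCardEq]
  rw [Theory.model_iff, Set.forall_mem_range, ← forall_exists_not_simRel_iff]
  constructor
  · rintro ⟨⟨hrefl, hsymm, htrans, hcard⟩, hfresh⟩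
    exact ⟨⟨hrefl.refl, hsymm.symm _ _, htrans.trans _ _ _⟩,
      fun a => (natCard_eq_iff_enatCard_eq hj).2 (hcard a), hfresh⟩
  · rintro ⟨hE, hcard, hfresh⟩
    exact ⟨⟨⟨hE.refl⟩, ⟨fun _ _ => hE.symm⟩, ⟨fun _ _ _ => hE.trans⟩,
      fun a => (natCard_eq_iff_enatCard_eq hj).1 (hcard a)⟩, hfresh⟩

end Axioms

theorem EqvClassesOfCard.of_elementaryEmbedding {M : Type*} [Language.graph.Structure M]
    (h : EqvClassesOfCard j M) (hj : j ≠ 0) (e : M ↪ₑ[Language.graph] N) :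
    EqvClassesOfCard j N := by
  rw [← model_eqvClassesOfCardTheory_iff hj, Theory.model_iff] at h ⊢
  exact fun φ hφ => (e.map_sentence φ).1 (h φ hφ)

def IsPartialIso (s : Set (N × N)) : Prop :=
  ∀ p ∈ s, ∀ q ∈ s, (p.1 = q.1 ↔ p.2 = q.2) ∧ (simRel N p.1 q.1 ↔ simRel N p.2 q.2)

theorem IsPartialIso.image_swap (hs : IsPartialIso s) : IsPartialIso (Prod.swap '' s) := by
  rintro _ ⟨p, hp, rfl⟩ _ ⟨q, hq, rfl⟩
  exact ⟨(hs p hp q hq).1.symm, (hs p hp q hq).2.symm⟩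

theorem IsPartialIso.injOn_fst (hs : IsPartialIso s) : Set.InjOn Prod.fst s :=
  fun p hp q hq hpq => Prod.ext hpq ((hs p hp q hq).1.1 hpq)

theorem IsPartialIso.injOn_snd (hs : IsPartialIso s) : Set.InjOn Prod.snd s :=
  fun p hp q hq hpq => Prod.ext ((hs p hp q hq).1.2 hpq) hpq

theorem IsPartialIso.insert (hE : Equivalence (simRel N)) (hs : IsPartialIso s) {c d : N}
    (h : ∀ q ∈ s, (c = q.1 ↔ d = q.2) ∧ (simRel N c q.1 ↔ simRel N d q.2)) :
    IsPartialIso (insert (c, d) s) := by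
  have hsymm : ∀ x y, simRel N x y ↔ simRel N y x := fun _ _ => ⟨hE.symm, hE.symm⟩
  rintro p (rfl | hp) q (rfl | hq)
  · exact ⟨iff_of_true rfl rfl, iff_of_true (hE.refl _) (hE.refl _)⟩
  · exact h q hq
  · rw [eq_comm, @eq_comm _ p.2, hsymm, hsymm p.2]
    exact h p hp
  · exact hs p hp q hq

theorem EqvClassesOfCard.exists_simRel_forall_ne (h : EqvClassesOfCard j N) (hj : j ≠ 0)
    (hs : IsPartialIso s) (hfin : s.Finite) {c : N} (hc : ∀ q ∈ s, q.1 ≠ c) (e : N) :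
    ∃ d, simRel N e d ∧ ∀ q ∈ s, simRel N c q.1 → q.2 ≠ d := by
  set D := {q ∈ s | simRel N c q.1}
  have hDs : D ⊆ s := Set.sep_subset _ _
  have hDc : Prod.fst '' D ⊂ {b | simRel N c b} := by
    refine (Set.ssubset_iff_of_subset ?_).2 ⟨c, h.equivalence.refl c, ?_⟩
    · rintro _ ⟨q, ⟨-, hcq⟩, rfl⟩
      exact hcq
    · rintro ⟨q, ⟨hq, -⟩, hqc⟩
      exact hc q hq hqc
  have hlt : (Prod.snd '' D).ncard < {b | simRel N e b}.ncard :=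
    calc (Prod.snd '' D).ncard = D.ncard := (hs.injOn_snd.mono hDs).ncard_image
      _ = (Prod.fst '' D).ncard := (hs.injOn_fst.mono hDs).ncard_image.symm
      _ < {b | simRel N c b}.ncard := Set.ncard_lt_ncard hDc (h.finite_class hj c)
      _ = {b | simRel N e b}.ncard := by rw [h.ncard_class, h.ncard_class]
  obtain ⟨d, hed, hd⟩ := Set.exists_mem_notMem_of_ncard_lt_ncard hlt ((hfin.subset hDs).image _)
  exact ⟨d, hed, fun q hq hcq hqd => hd ⟨q, ⟨hq, hcq⟩, hqd⟩⟩

theorem EqvClassesOfCard.exists_forth (h : EqvClassesOfCard j N) (hj : j ≠ 0)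
    (hs : IsPartialIso s) (hfin : s.Finite) (c : N) {T : Set N} (hT : T.Finite)
    (hsT : ∀ q ∈ s, ∀ t ∈ T, ¬ simRel N q.2 t) :
    ∃ d, IsPartialIso (insert (c, d) s) ∧ ∀ t ∈ T, ¬ simRel N d t := by
  have hE := h.equivalence
  have hcongr : ∀ {x y} z, simRel N x y → (simRel N x z ↔ simRel N y z) :=
    fun _ hxy => ⟨hE.trans (hE.symm hxy), hE.trans hxy⟩
  by_cases hdom : ∃ p ∈ s, p.1 = c
  · obtain ⟨p, hp, rfl⟩ := hdom
    exact ⟨p.2, hs.insert hE (hs p hp), hsT p hp⟩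
  push Not at hdom
  by_cases hcls : ∃ p ∈ s, simRel N c p.1
  · obtain ⟨p, hp, hcp⟩ := hcls
    obtain ⟨d, hpd, hd⟩ := h.exists_simRel_forall_ne hj hs hfin hdom p.2
    refine ⟨d, hs.insert hE fun q hq => ⟨iff_of_false (fun e => hdom q hq e.symm) ?_, ?_⟩,
      fun t ht hdt => hsT p hp t ht (hE.trans hpd hdt)⟩
    · rintro rfl
      exact hd q hq (hE.trans hcp ((hs p hp q hq).2.2 hpd)) rfl
    · rw [hcongr _ hcp, (hs p hp q hq).2, hcongr _ (hE.symm hpd)]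
  · push Not at hcls
    obtain ⟨d, hd⟩ := h.exists_not_simRel (Prod.snd '' s ∪ T) ((hfin.image _).union hT)
    have hdq : ∀ q ∈ s, ¬ simRel N d q.2 := fun q hq => hd q.2 (Or.inl ⟨q, hq, rfl⟩)
    refine ⟨d, hs.insert hE fun q hq => ⟨iff_of_false ?_ ?_, iff_of_false (hcls q hq) (hdq q hq)⟩,
      fun t ht => hd t (Or.inr ht)⟩
    · rintro rfl
      exact hcls q hq (hE.refl _)
    · rintro rfl
      exact hdq q hq (hE.refl _)

theorem EqvClassesOfCard.exists_back (h : EqvClassesOfCard j N) (hj : j ≠ 0)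
    (hs : IsPartialIso s) (hfin : s.Finite) (d : N) : ∃ c, IsPartialIso (insert (c, d) s) := by
  obtain ⟨c, hc, -⟩ :=
    h.exists_forth hj hs.image_swap (hfin.image _) d Set.finite_empty (by simp)
  refine ⟨c, ?_⟩
  simpa [Set.image_insert_eq, Set.image_image] using hc.image_swap

theorem realize_term_mem {α : Type*} {n : ℕ} (t : Language.graph.Term (α ⊕ Fin n))
    {v w : α → N} {xs ys : Fin n → N} (hv : ∀ a, (v a, w a) ∈ s) (hx : ∀ i, (xs i, ys i) ∈ s) :
    (t.realize (Sum.elim v xs), t.realize (Sum.elim w ys)) ∈ s := by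
  cases t with
  | var x => cases x with
    | inl a => exact hv a
    | inr i => exact hx i
  | func f _ => exact isEmptyElim f

theorem EqvClassesOfCard.realize_iff_of_isPartialIso (h : EqvClassesOfCard j N) (hj : j ≠ 0)
    {α : Type*} {n : ℕ} (φ : Language.graph.BoundedFormula α n) (hs : IsPartialIso s) (hfin : s.Finite) {v w : α → N} {xs ys : Fin n → N}
    (hv : ∀ a, (v a, w a) ∈ s) (hx : ∀ i, (xs i, ys i) ∈ s) :
    φ.Realize v xs ↔ φ.Realize w ys := by
  induction φ generalizing s with
  | falsum => exact Iff.rfl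
  | equal t₁ t₂ => exact (hs _ (realize_term_mem t₁ hv hx) _ (realize_term_mem t₂ hv hx)).1
  | rel R ts =>
    cases R
    exact (relMap_adj_iff fun i => (ts i).realize (Sum.elim v xs)).trans <|
      (hs _ (realize_term_mem (ts 0) hv hx) _ (realize_term_mem (ts 1) hv hx)).2.trans
        (relMap_adj_iff fun i => (ts i).realize (Sum.elim w ys)).symm
  | imp φ₁ φ₂ ih₁ ih₂ =>
    exact imp_congr (ih₁ hs hfin hv hx) (ih₂ hs hfin hv hx)
  | all φ ih =>
    have hsnoc : ∀ {c d : N} i, (Fin.snoc (α := fun _ => N) xs c i,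
        Fin.snoc (α := fun _ => N) ys d i) ∈ insert (c, d) s := by
      intro c d i
      induction i using Fin.lastCases <;> simp [hx]
    simp only [BoundedFormula.realize_all]
    constructor
    · intro hall d
      obtain ⟨c, hc⟩ := h.exists_back hj hs hfin d
      exact (ih hc (hfin.insert _) (fun a => Or.inr (hv a)) hsnoc).1 (hall c)
    · intro hall c
      obtain ⟨d, hd, -⟩ := h.exists_forth hj hs hfin c Set.finite_empty (by simp)
      exact (ih hd (hfin.insert _) (fun a => Or.inr (hv a)) hsnoc).2 (hall d)

theorem EqvClassesOfCard.realize_formula_iff (h : EqvClassesOfCard j N) (hj : j ≠ 0)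
    {α : Type*} [Finite α] (φ : Language.graph.Formula α) {v w : α → N}
    (hvw : IsPartialIso (Set.range fun a => (v a, w a))) : φ.Realize v ↔ φ.Realize w :=
  h.realize_iff_of_isPartialIso hj φ hvw (Set.finite_range _) (fun a => ⟨a, rfl⟩) finZeroElim

theorem isPartialIso_range_sumElim (hE : Equivalence (simRel N)) {ι A : Type*}
    [Language.graph.Structure A] (u : ι → N) (F₁ F₂ : A ↪[Language.graph] N)
    (h₁ : ∀ a i, ¬ simRel N (F₁ a) (u i)) (h₂ : ∀ a i, ¬ simRel N (F₂ a) (u i)) :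
    IsPartialIso (Set.range fun x => (Sum.elim u F₁ x, Sum.elim u F₂ x)) := by
  have hne : ∀ (F : A ↪[Language.graph] N), (∀ a i, ¬ simRel N (F a) (u i)) → ∀ a i, u i ≠ F a :=
    fun F hF a i e => hF a i (e ▸ hE.refl _)
  rintro _ ⟨i | a, rfl⟩ _ ⟨i' | a', rfl⟩
  · exact ⟨Iff.rfl, Iff.rfl⟩
  · exact ⟨iff_of_false (hne F₁ h₁ a' i) (hne F₂ h₂ a' i),
      iff_of_false (fun r => h₁ a' i (hE.symm r)) (fun r => h₂ a' i (hE.symm r))⟩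
  · exact ⟨iff_of_false (hne F₁ h₁ a i').symm (hne F₂ h₂ a i').symm,
      iff_of_false (h₁ a i') (h₂ a i')⟩
  · exact ⟨F₁.injective.eq_iff.trans F₂.injective.eq_iff.symm,
      (simRel_map_iff F₁ a a').trans (simRel_map_iff F₂ a a').symm⟩

end EquivalenceClasses

section FreshCopy

variable {M : Type*} [Language.graph.Structure M] {j : ℕ} {s : Set (M × M)}

theorem IsPartialIso.exists_embedding {B : Type*} [Language.graph.Structure B]
    (gB : B ↪[Language.graph] M) (hs : IsPartialIso s) (hdom : Set.range gB ⊆ Prod.fst '' s) :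
    ∃ g : B ↪[Language.graph] M, ∀ b, (gB b, g b) ∈ s := by
  choose q hq hq₁ using fun b => hdom ⟨b, rfl⟩
  refine ⟨embeddingOfSimRelIff (fun b => (q b).2) (fun b b' e => gB.injective ?_) fun b b' => ?_,
    fun b => by rw [← hq₁ b]; exact hq b⟩
  · rw [← hq₁ b, ← hq₁ b']
    exact (hs _ (hq b) _ (hq b')).1.2 e
  · rw [← (hs _ (hq b) _ (hq b')).2, hq₁, hq₁, simRel_map_iff]

theorem EqvClassesOfCard.exists_isPartialIso_avoiding (h : EqvClassesOfCard j M) (hj : j ≠ 0)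
    {S T : Set M} (hS : S.Finite) (hT : T.Finite) :
    ∃ s, IsPartialIso s ∧ s.Finite ∧ S ⊆ Prod.fst '' s ∧ ∀ q ∈ s, ∀ t ∈ T, ¬ simRel M q.2 t := by
  induction S, hS using Set.Finite.induction_on with
  | empty => exact ⟨∅, by simp [IsPartialIso], Set.finite_empty, by simp, by simp⟩
  | @insert c S _ _ ih =>
    obtain ⟨s, hs, hfin, hS, hsT⟩ := ih
    obtain ⟨d, hd, hdT⟩ := h.exists_forth hj hs hfin c hT hsT
    refine ⟨insert (c, d) s, hd, hfin.insert _, ?_, ?_⟩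
    · exact Set.insert_subset ⟨_, Set.mem_insert _ _, rfl⟩
        (hS.trans (Set.image_mono (Set.subset_insert _ _)))
    · rintro q (rfl | hq)
      exacts [hdT, hsT q hq]

theorem EqvClassesOfCard.exists_embedding_avoiding (h : EqvClassesOfCard j M) (hj : j ≠ 0)
    {B : Type*} [Language.graph.Structure B] [Finite B] (gB : B ↪[Language.graph] M) {T : Set M}
    (hT : T.Finite) : ∃ g : B ↪[Language.graph] M, ∀ b, ∀ t ∈ T, ¬ simRel M (g b) t := by
  obtain ⟨s, hs, -, hdom, hsT⟩ := h.exists_isPartialIso_avoiding hj (Set.finite_range gB) hT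
  obtain ⟨g, hg⟩ := hs.exists_embedding gB hdom
  exact ⟨g, fun b => hsT _ (hg b)⟩

theorem EqvClassesOfCard.finite_setOf_simRel (h : EqvClassesOfCard j M) (hj : j ≠ 0)
    {N : Type*} [Language.graph.Structure N] (hN : Equivalence (simRel N))
    (F : M ↪[Language.graph] N) (x : N) : {m : M | simRel N (F m) x}.Finite := by
  rcases Set.eq_empty_or_nonempty {m : M | simRel N (F m) x} with he | ⟨m₀, hm₀⟩
  · rw [he]
    exact Set.finite_empty
  · refine (h.finite_class hj m₀).subset fun m hm => ?_
    exact (simRel_map_iff F m₀ m).1 (hN.trans hm₀ (hN.symm hm))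

end FreshCopy

theorem EqvClassesOfCard.extDefRamsey {M : Type w} [Language.graph.Structure M] {j : ℕ}
    (h : EqvClassesOfCard j M) (hj : j ≠ 0) : ExtDefRamsey Language.graph M := by
  rintro A _ _ - _ - B _ _ ⟨gB⟩ χ ⟨e, φ, N, emb, eb, hχ⟩
  have hN : EqvClassesOfCard j N := h.of_elementaryEmbedding hj emb
  have hbad : {m : M | ∃ r, simRel N (emb m) (eb r)}.Finite := by
    simpa only [Set.ofPred_exists, ElementaryEmbedding.coe_toEmbedding] using
      Set.finite_iUnion fun r => h.finite_setOf_simRel hj hN.equivalence emb.toEmbedding (eb r)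
  obtain ⟨g, hg⟩ := h.exists_embedding_avoiding hj gB hbad
  have hfresh : ∀ f : A ↪[Language.graph] M, Set.range f ⊆ Set.range g →
      ∀ a r, ¬ simRel N (emb (f a)) (eb r) := by
    intro f hf a r har
    obtain ⟨b, hb⟩ := hf ⟨a, rfl⟩
    exact hg b (f a) ⟨r, har⟩ (hb ▸ h.equivalence.refl _)
  refine ⟨g, fun f₁ f₂ h₁ h₂ => ?_⟩
  have hφ : ∀ i, (φ i).Realize (Sum.elim eb fun a => emb (f₁ a)) ↔
      (φ i).Realize (Sum.elim eb fun a => emb (f₂ a)) := fun i =>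
    hN.realize_formula_iff hj (φ i) <| isPartialIso_range_sumElim hN.equivalence eb
      (emb.toEmbedding.comp f₁) (emb.toEmbedding.comp f₂) (hfresh f₁ h₁) (hfresh f₂ h₂)
  exact ((hχ f₂ _).2 ((hφ _).1 ((hχ f₁ _).1 rfl))).symm

abbrev singleClass (X : Type*) : Language.graph.Structure X where
  RelMap _ _ := True

section NotPointRamsey

variable {M : Type w} [Language.graph.Structure M]

noncomputable def pointEmbedding (hE : Equivalence (simRel M)) (x : M) :
    letI := singleClass PUnit.{w + 1}
    PUnit ↪[Language.graph] M :=
  letI := singleClass PUnit.{w + 1}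
  embeddingOfSimRelIff (fun _ => x) (fun _ _ _ => Subsingleton.elim _ _)
    fun _ _ => iff_of_true (hE.refl x) trivial

theorem range_eq_setOf_simRel {j : ℕ} (hj : j ≠ 0)
    (hsize : ∀ a, Nat.card {b // simRel M a b} = j) {B : Type w} (g : B → M)
    (hg : Function.Injective g) (hB : Nat.card B = j) (hsim : ∀ b b', simRel M (g b) (g b'))
    (b₀ : B) : Set.range g = {x | simRel M (g b₀) x} := by
  refine Set.eq_of_subset_of_ncard_le (Set.range_subset_iff.2 (hsim b₀)) ?_
    (Set.finite_coe_iff.mp (Nat.finite_of_card_ne_zero ((hsize (g b₀)).symm ▸ hj)))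
  rw [Set.ncard_range_of_injective hg, hB, ← Nat.card_coe_set_eq]
  exact (hsize _).le

theorem not_pointRamsey [Nonempty M] (hE : Equivalence (simRel M)) {j : ℕ} (hj : 2 ≤ j)
    (hsize : ∀ a, Nat.card {b // simRel M a b} = j) : ¬ PointRamsey Language.graph M := by
  classical
  intro hPR
  let S : Setoid M := ⟨simRel M, hE⟩
  let rep (x : M) : M := (Quotient.mk S x).out
  let _ := singleClass PUnit.{w + 1}
  let χ (f : PUnit ↪[Language.graph] M) : Fin 2 := if rep (f ⟨⟩) = f ⟨⟩ then 0 else 1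
  obtain ⟨m₀⟩ := ‹Nonempty M›
  let B := {b // simRel M m₀ b}
  let _ := singleClass B
  have : Finite B := Nat.finite_of_card_ne_zero (by rw [hsize]; omega)
  obtain ⟨g, hg⟩ := hPR PUnit inferInstance Nat.card_unique ⟨pointEmbedding hE m₀⟩ 2
    (by norm_num) B inferInstance
    ⟨embeddingOfSimRelIff Subtype.val Subtype.val_injective
      fun x y => iff_of_true (hE.trans (hE.symm x.2) y.2) trivial⟩ χ
  set c := g ⟨m₀, hE.refl m₀⟩
  have hrange : Set.range g = {x | simRel M c x} :=
    range_eq_setOf_simRel (by omega) hsize g g.injective (hsize m₀)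
      (fun b b' => (simRel_map_iff g b b').2 trivial) _
  have hrep : ∀ x ∈ Set.range g, rep x = rep c := by
    rw [hrange]
    exact fun x hx => congrArg Quotient.out (Quotient.sound (hE.symm hx))
  have hrepc : rep c ∈ Set.range g := by
    rw [hrange]
    exact hE.symm (Quotient.mk_out c)
  obtain ⟨u, hu, hne⟩ := Set.exists_ne_of_one_lt_ncard
    (by rw [Set.ncard_range_of_injective g.injective, hsize]; omega) (rep c)
  have hmono := hg (pointEmbedding hE (rep c)) (pointEmbedding hE u)
    (Set.range_subset_iff.2 fun _ => hrepc) (Set.range_subset_iff.2 fun _ => hu)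
  have h₀ : χ (pointEmbedding hE (rep c)) = 0 := if_pos (hrep _ hrepc)
  have h₁ : χ (pointEmbedding hE u) = 1 := if_neg fun e => hne (e.symm.trans (hrep u hu))
  exact absurd (h₀.symm.trans (hmono.trans h₁)) (by decide)

end NotPointRamsey

theorem eqRel_classes_size_j_general (j : ℕ) (hj : 2 ≤ j)
    (M : Type) [Infinite M] [Language.graph.Structure M]
    (hE : Equivalence (simRel M))
    (hsize : ∀ a : M, Nat.card {b : M // simRel M a b} = j)
    (hinfcl : {s : Set M | ∃ a : M, s = {b : M | simRel M a b}}.Infinite) :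
    ExtDefRamsey Language.graph M ∧ ¬ PointRamsey Language.graph M :=
  ⟨(EqvClassesOfCard.of_infinite_classes hE hsize hinfcl).extDefRamsey (by omega),
    not_pointRamsey hE hj hsize⟩

/-- **Proposition 6.3(1).** Fix `2 ≤ j`. If `M` is a countably infinite structure in the
language of a single binary relation `∼` interpreted as an equivalence relation with
infinitely many classes, each of size exactly `j`, then `M` has the externally definable
Ramsey property, but not the point-Ramsey property. -/
theorem eqRel_classes_size_j (j : ℕ) (hj : 2 ≤ j)
    (M : Type) [Countable M] [Infinite M] [Language.graph.Structure M]
    (hE : Equivalence (simRel M))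
    (hsize : ∀ a : M, Nat.card {b : M // simRel M a b} = j)
    (hinfcl : {s : Set M | ∃ a : M, s = {b : M | simRel M a b}}.Infinite) :
    ExtDefRamsey Language.graph M ∧ ¬ PointRamsey Language.graph M :=
  eqRel_classes_size_j_general j hj M hE hsize hinfcl

end EDRP
end

section
/- Fix a natural number i with 2 ≤ i < ω. Let L = {∼} be the language with one binary relation symbol, and let M be an L-structure with countably infinite domain in which ∼ is an equivalence relation with exactly i equivalence classes, each infinite. Then M does not have the externally definable Ramsey property: for a fixed point e ∈ M, the 2-colouring of points of M given by membership in the ∼-class of e is externally definable (indeed definable with parameter e in M itself), and it admits no monochromatic copy of the structure B consisting of i pairwise ∼-inequivalent points. (Proposition 6.3(2).) -/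
open FirstOrder FirstOrder.Language CategoryTheory

universe u v w

namespace EDRP

/-- One-point structure in the graph language, with the relation always true. -/
instance unitStruct : Language.graph.Structure Unit where
  funMap := fun f _ => isEmptyElim f
  RelMap := fun _ _ => True

/-- `Fin i` with the graph relation interpreted as equality. -/
instance finStruct (i : ℕ) : Language.graph.Structure (Fin i) where
  funMap := fun f _ => isEmptyElim f
  RelMap := fun {n} r x => match n, r with
    | 2, .adj => x 0 = x 1

/-- Embedding of the one-point structure at a reflexive point `m`. -/
def ptEmb {M : Type} [Language.graph.Structure M] (m : M) (hm : simRel M m m) :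
    Unit ↪[Language.graph] M where
  toFun := fun _ => m
  inj' := fun a b _ => Subsingleton.elim a b
  map_fun' := fun f _ => isEmptyElim f
  map_rel' := by
    intro n r x
    match n, r with
    | 2, .adj =>
      refine iff_of_true ?_ trivial
      have hx : ((fun _ : Unit => m) ∘ x) = ![m, m] := by
        funext j; fin_cases j <;> rfl
      show Structure.RelMap Language.adj ((fun _ : Unit => m) ∘ x)
      rw [hx]; exact hm

/-- Embedding of `Fin i` (relation = equality) given points pairwise related iff equal. -/
def finEmb {M : Type} [Language.graph.Structure M] {i : ℕ} (g : Fin i → M)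
    (h : ∀ a b, simRel M (g a) (g b) ↔ a = b) : (Fin i) ↪[Language.graph] M where
  toFun := g
  inj' := by
    intro a b hab
    refine (h a b).1 ?_
    rw [← hab]
    exact (h a a).2 rfl
  map_fun' := fun f _ => isEmptyElim f
  map_rel' := by
    intro n r x
    match n, r with
    | 2, .adj =>
      have hx : g ∘ x = ![g (x 0), g (x 1)] := by
        funext j; fin_cases j <;> rfl
      show Structure.RelMap Language.adj (g ∘ x) ↔ (x 0 = x 1)
      rw [hx]
      exact h (x 0) (x 1)

/-- **Proposition 6.3(2).** Fix `2 ≤ i`. If `M` is a countably infinite structure in the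
language of a single binary relation `∼` interpreted as an equivalence relation with exactly
`i` classes, each infinite, then `M` does not have the externally definable Ramsey
property. -/
theorem eqRel_finitely_many_classes (i : ℕ) (hi : 2 ≤ i)
    (M : Type) [Countable M] [Infinite M] [Language.graph.Structure M]
    (hE : Equivalence (simRel M))
    (hnum : Nat.card (Quotient (⟨simRel M, hE⟩ : Setoid M)) = i)
    (hinf : ∀ a : M, {b : M | simRel M a b}.Infinite) :
    ¬ ExtDefRamsey Language.graph M := by
  classical
  intro hR
  set S : Setoid M := ⟨simRel M, hE⟩ with hS
  haveI : Finite (Quotient S) := Nat.finite_of_card_ne_zero (by omega)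
  haveI : Fintype (Quotient S) := Fintype.ofFinite _
  obtain ⟨e⟩ : Nonempty M := inferInstance
  -- the colouring
  let χ : (Unit ↪[Language.graph] M) → Fin 2 :=
    fun f => if simRel M e (f ()) then 0 else 1
  -- external definability of χ
  have hdef : ExtDefinable Language.graph M Unit χ := by
    refine ⟨1, ![Relations.formula₂ adj (Term.var (Sum.inl 0)) (Term.var (Sum.inr ())),
      Formula.not (Relations.formula₂ adj (Term.var (Sum.inl 0)) (Term.var (Sum.inr ())))],
      ⟨M, inferInstance⟩, ElementaryEmbedding.refl _ _, ![e], ?_⟩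
    intro f i'
    have hreal : (Relations.formula₂ adj (Term.var (Sum.inl 0))
        (Term.var (Sum.inr ()))).Realize
        (Sum.elim (![e] : Fin 1 → M)
          fun a => (ElementaryEmbedding.refl Language.graph M) (f a)) ↔
        simRel M e (f ()) := by
      rw [Formula.realize_rel₂]
      simp [simRel]
    fin_cases i'
    · constructor
      · intro h
        have hc : simRel M e (f ()) := by
          by_contra hn
          simp only [χ, if_neg hn] at h
          exact absurd h (by decide)
        exact hreal.2 hc
      · intro h
        have hc := hreal.1 h
        simp [χ, if_pos hc]
    · constructor
      · intro h
        have hn : ¬ simRel M e (f ()) := by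
          intro hc
          simp only [χ, if_pos hc] at h
          exact absurd h (by decide)
        exact Formula.realize_not.2 fun hc => hn (hreal.1 hc)
      · intro h
        have hn : ¬ simRel M e (f ()) := fun hc => (Formula.realize_not.1 h) (hreal.2 hc)
        simp [χ, if_neg hn]
  -- the target structure `Fin i` embeds into M: take class representatives
  let Q := Quotient S
  let eqv : Q ≃ Fin i := Fintype.equivFinOfCardEq (by rw [← Nat.card_eq_fintype_card]; exact hnum)
  have hsim_iff : ∀ x y : M, simRel M x y ↔ (Quotient.mk S x = Quotient.mk S y) :=
    fun x y => ⟨fun h => Quotient.sound h, fun h => Quotient.exact h⟩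
  have hg0 : ∀ a b : Fin i, simRel M ((eqv.symm a).out) ((eqv.symm b).out) ↔ a = b := by
    intro a b
    rw [hsim_iff]
    simp only [Quotient.out_eq]
    constructor
    · intro h; exact eqv.symm.injective h
    · intro h; rw [h]
  -- apply the Ramsey property
  obtain ⟨g, hg⟩ := hR Unit inferInstance ⟨ptEmb e (hE.refl e)⟩ 2 (by norm_num)
    (Fin i) inferInstance ⟨finEmb _ hg0⟩ χ hdef
  -- the image of g has one point in each class
  have hgdist : ∀ a b : Fin i, simRel M (g a) (g b) ↔ a = b := by
    intro a b
    have := g.map_rel' Language.adj ![a, b]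
    have hx : (g.toFun ∘ ![a, b]) = ![g a, g b] := by
      funext j; fin_cases j <;> rfl
    rw [hx] at this
    exact this.trans (by exact Iff.rfl)
  have hinj : Function.Injective (fun j : Fin i => Quotient.mk S (g j)) := by
    intro a b hab
    exact (hgdist a b).1 (Quotient.exact hab)
  have hsurj : Function.Surjective (fun j : Fin i => Quotient.mk S (g j)) := by
    have h2 : Function.Injective (eqv ∘ fun j : Fin i => Quotient.mk S (g j)) :=
      eqv.injective.comp hinj
    have h3 := (Finite.injective_iff_surjective).1 h2
    intro q
    obtain ⟨j, hj⟩ := h3 (eqv q)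
    exact ⟨j, eqv.injective hj⟩
  obtain ⟨j₀, hj₀⟩ := hsurj (Quotient.mk S e)
  have hsim₀ : simRel M e (g j₀) := hE.symm (Quotient.exact hj₀)
  haveI : Nontrivial (Fin i) := Fin.nontrivial_iff_two_le.2 hi
  obtain ⟨j₁, hj₁⟩ := exists_ne j₀
  have hnsim₁ : ¬ simRel M e (g j₁) := by
    intro h
    exact hj₁ ((hgdist j₁ j₀).1 (hE.trans (hE.symm h) hsim₀))
  -- the two embeddings of the point into the image of g
  let f₀ := ptEmb (g j₀) ((hgdist j₀ j₀).2 rfl)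
  let f₁ := ptEmb (g j₁) ((hgdist j₁ j₁).2 rfl)
  have hr₀ : Set.range (f₀ : Unit → M) ⊆ Set.range (g : Fin i → M) := by
    rintro _ ⟨u, rfl⟩; exact ⟨j₀, rfl⟩
  have hr₁ : Set.range (f₁ : Unit → M) ⊆ Set.range (g : Fin i → M) := by
    rintro _ ⟨u, rfl⟩; exact ⟨j₁, rfl⟩
  have hmono := hg f₀ f₁ hr₀ hr₁
  have hχ₀ : χ f₀ = 0 := by
    have h' : simRel M e (f₀ ()) := hsim₀
    simp [χ, h']
  have hχ₁ : χ f₁ = 1 := by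
    have h' : ¬ simRel M e (f₁ ()) := hnsim₁
    simp [χ, h']
  rw [hχ₀, hχ₁] at hmono
  exact absurd hmono (by decide)


end EDRP
end

section
/- Let D = {q ∈ ℚ : 0 ≤ q < 1 and the denominator of q in lowest terms is odd}, and let S(2) be the structure in the language L = {R} (one binary relation symbol) with domain D, where a R b holds iff (b − a) mod 1 ∈ (0, 1/2). (S(2) is a tournament, the dense local order.) Then S(2) does not have the externally definable Ramsey property: for any fixed e ∈ D, the 2-colouring of points a ∈ D given by whether e R a holds is externally definable, the directed 3-cycle C⃗₃ embeds into S(2), yet no copy of C⃗₃ in S(2) is monochromatic for this colouring. (Proposition 6.6.) -/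
open FirstOrder FirstOrder.Language CategoryTheory

universe u v w

namespace EDRP

/-- The domain of the dense local order `S(2)`: rationals in `[0, 1)` with odd denominator
(so that no two points are antipodal on the circle `ℝ/ℤ`). -/
def S2domain : Set ℚ := {q : ℚ | 0 ≤ q ∧ q < 1 ∧ Odd q.den}

private lemma halfLemma {u v : ℚ} (h : |v - u| < 1/2)
    (h0 : 0 < Int.fract (v - u)) (h1 : Int.fract (v - u) < 1/2) : u < v := by
  rw [abs_lt] at h
  rcases lt_trichotomy u v with h' | h' | h'
  · exact h'
  · subst h'; simp at h0
  · exfalso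
    have e1 : Int.fract ((v - u) + ((1 : ℤ) : ℚ)) = Int.fract (v - u) := Int.fract_add_intCast _ _
    have e2 : Int.fract ((v - u) + ((1 : ℤ) : ℚ)) = (v - u) + 1 := by
      rw [Int.fract_eq_self.mpr ⟨by push_cast [h.1]; linarith [h.1], by push_cast; linarith⟩]
      push_cast; ring
    rw [e1] at e2
    linarith [h.1]

/-- structure on PUnit : no relations -/
def Astruct : Language.graph.Structure PUnit where
  funMap := fun f _ => Empty.elim f
  RelMap := fun _ _ => False

/-- structure on Fin 3 : directed 3-cycle -/
def Bstruct : Language.graph.Structure (Fin 3) where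
  funMap := fun f _ => Empty.elim f
  RelMap := fun r x => match r with | .adj => x 1 = x 0 + 1

/-- **Proposition 6.6.** The dense local order `S(2)` — the structure on `S2domain` in the
language of one binary relation `R`, with `a R b` iff `(b - a) mod 1 ∈ (0, 1/2)` — does not
have the externally definable Ramsey property. -/
theorem s2_not_extDefRamsey [Language.graph.Structure ↥S2domain]
    (hstr : ∀ a b : ↥S2domain, simRel ↥S2domain a b ↔
      (0 < Int.fract ((b : ℚ) - (a : ℚ)) ∧ Int.fract ((b : ℚ) - (a : ℚ)) < 1 / 2)) :
    ¬ ExtDefRamsey Language.graph ↥S2domain := by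
  classical
  intro h
  letI Ast := Astruct
  letI Bst := Bstruct
  -- base point 0
  have h0mem : (0:ℚ) ∈ S2domain := ⟨le_refl 0, by norm_num, by rw [show (0:ℚ).den = 1 from rfl]; exact ⟨0, rfl⟩⟩
  let e0 : ↥S2domain := ⟨0, h0mem⟩
  have hnoloop : ∀ a : ↥S2domain, ¬ simRel ↥S2domain a a := by
    intro a ha
    rw [hstr] at ha
    simp at ha
  -- point embeddings
  let ptemb : ↥S2domain → (PUnit ↪[Language.graph] ↥S2domain) := fun a =>
    { toFun := fun _ => a
      inj' := fun x y _ => rfl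
      map_fun' := fun {n} f _ => Empty.elim f
      map_rel' := by
        intro n r x
        cases r
        have hx : ((fun (_ : PUnit) => a) ∘ x) = ![a, a] := by
          funext i; fin_cases i <;> rfl
        rw [hx]
        exact iff_of_false (hnoloop a) (fun hf => hf)
      }
  -- the colouring
  let χ : (PUnit ↪[Language.graph] ↥S2domain) → Fin 2 := fun f =>
    if simRel ↥S2domain e0 (f PUnit.unit) then 1 else 0
  -- formulas
  let ψ : Language.graph.Formula (Fin 1 ⊕ PUnit) :=
    Language.adj.formula₂ (Term.var (Sum.inl 0)) (Term.var (Sum.inr PUnit.unit))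
  have hdef : ExtDefinable Language.graph ↥S2domain PUnit χ := by
    refine ⟨1, ![∼ψ, ψ], ⟨↥S2domain, inferInstance⟩, ElementaryEmbedding.refl _ _,
      fun _ => e0, ?_⟩
    intro f i
    fin_cases i
    · by_cases hP : simRel ↥S2domain e0 (f PUnit.unit) <;>
        simp [χ, ψ, hP, Formula.realize_rel₂, ElementaryEmbedding.refl_apply]
    · by_cases hP : simRel ↥S2domain e0 (f PUnit.unit) <;>
        simp [χ, ψ, hP, Formula.realize_rel₂, ElementaryEmbedding.refl_apply]
  -- the B-copy : directed triangle 0, 1/3, 2/3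
  have m0 : (0:ℚ) ∈ S2domain := h0mem
  have m1 : (1/3:ℚ) ∈ S2domain := by
    refine ⟨by norm_num, by norm_num, ?_⟩
    have := Rat.den_div_eq_of_coprime (a := 1) (b := 3) (by norm_num) (by norm_num)
    have h3 : ((1:ℚ)/3).den = 3 := by
      rw [show ((1:ℚ)/3) = ((1:ℤ):ℚ)/((3:ℤ):ℚ) by norm_num]
      exact_mod_cast this
    rw [h3]; exact ⟨1, rfl⟩
  have m2 : (2/3:ℚ) ∈ S2domain := by
    refine ⟨by norm_num, by norm_num, ?_⟩
    have := Rat.den_div_eq_of_coprime (a := 2) (b := 3) (by norm_num) (by decide)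
    have h3 : ((2:ℚ)/3).den = 3 := by
      rw [show ((2:ℚ)/3) = ((2:ℤ):ℚ)/((3:ℤ):ℚ) by norm_num]
      exact_mod_cast this
    rw [h3]; exact ⟨1, rfl⟩
  let p : Fin 3 → ↥S2domain := ![⟨0, m0⟩, ⟨1/3, m1⟩, ⟨2/3, m2⟩]
  have fA : Int.fract ((1:ℚ)/3) = 1/3 := Int.fract_eq_self.mpr (by norm_num)
  have fB : Int.fract ((2:ℚ)/3) = 2/3 := Int.fract_eq_self.mpr (by norm_num)
  have fC : Int.fract (-(1/3) : ℚ) = 2/3 := by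
    rw [show (-(1/3) : ℚ) = 2/3 + ((-1:ℤ):ℚ) by norm_num, Int.fract_add_intCast, fB]
  have fD : Int.fract (-(2/3) : ℚ) = 1/3 := by
    rw [show (-(2/3) : ℚ) = 1/3 + ((-1:ℤ):ℚ) by norm_num, Int.fract_add_intCast, fA]
  have hfr : ∀ i j : Fin 3,
      (0 < Int.fract ((p j : ℚ) - (p i : ℚ)) ∧ Int.fract ((p j : ℚ) - (p i : ℚ)) < 1/2)
        ↔ j = i + 1 := by
    intro i j
    fin_cases i <;> fin_cases j <;>
      simp only [p, Fin.isValue, Matrix.cons_val_zero, Matrix.cons_val_one, Matrix.head_cons,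
        Matrix.cons_val_two, Matrix.tail_cons, Fin.mk_one] <;>
      first
        | exact iff_of_true (by norm_num [fA, fB, fC, fD]) (by decide)
        | exact iff_of_false (by norm_num [fA, fB, fC, fD]) (by decide)
  -- injectivity of the triangle map
  have hpinj : Function.Injective p := by
    intro i j hij
    fin_cases i <;> fin_cases j <;> first
      | rfl
      | (exfalso
         simp only [p, Matrix.cons_val_zero, Matrix.cons_val_one, Matrix.head_cons,
           Matrix.cons_val_two, Matrix.tail_cons, Subtype.mk.injEq, Fin.mk_one] at hij
         norm_num at hij)
  -- the triangle embedding
  let gemb : Fin 3 ↪[Language.graph] ↥S2domain :=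
    { toFun := p
      inj' := hpinj
      map_fun' := fun f _ => Empty.elim f
      map_rel' := by
        intro n r x
        cases r
        have hx : (p ∘ x) = ![p (x 0), p (x 1)] := by
          funext k; fin_cases k <;> rfl
        rw [hx]
        show simRel ↥S2domain (p (x 0)) (p (x 1)) ↔ (x 1 = x 0 + 1)
        rw [hstr]
        exact hfr (x 0) (x 1) }
  obtain ⟨g, hg⟩ :=
    h PUnit inferInstance ⟨ptemb e0⟩ 2 (by norm_num) (Fin 3) inferInstance ⟨gemb⟩ χ hdef
  -- notation
  let u : Fin 3 → ℚ := fun i => (g i : ℚ)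
  have hmem : ∀ i, 0 ≤ u i ∧ u i < 1 ∧ Odd (u i).den := fun i => (g i).prop
  have hrel : ∀ i j : Fin 3, simRel ↥S2domain (g i) (g j) ↔ j = i + 1 := by
    intro i j
    have hmr := g.map_rel' Language.adj ![i, j]
    have hx : (g.toFun ∘ ![i, j]) = ![g i, g j] := by
      funext k; fin_cases k <;> rfl
    rw [hx] at hmr
    exact hmr.trans Iff.rfl
  have hPiff : ∀ i, simRel ↥S2domain e0 (g i) ↔ (0 < u i ∧ u i < 1/2) := by
    intro i
    rw [hstr]
    have h1 : (g i : ℚ) - ((e0 : ↥S2domain) : ℚ) = u i := by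
      show (g i : ℚ) - 0 = u i; ring
    rw [h1, Int.fract_eq_self.mpr ⟨(hmem i).1, (hmem i).2.1⟩]
  have e01 : 0 < Int.fract (u 1 - u 0) ∧ Int.fract (u 1 - u 0) < 1/2 := by
    have h1 := (hrel 0 1).mpr (by decide); rw [hstr] at h1; exact h1
  have e12 : 0 < Int.fract (u 2 - u 1) ∧ Int.fract (u 2 - u 1) < 1/2 := by
    have h1 := (hrel 1 2).mpr (by decide); rw [hstr] at h1; exact h1
  have e20 : 0 < Int.fract (u 0 - u 2) ∧ Int.fract (u 0 - u 2) < 1/2 := by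
    have h1 := (hrel 2 0).mpr (by decide); rw [hstr] at h1; exact h1
  have hsame : ∀ i j : Fin 3, simRel ↥S2domain e0 (g i) ↔ simRel ↥S2domain e0 (g j) := by
    intro i j
    have hrange : ∀ m : Fin 3,
        Set.range ((ptemb (g m) : PUnit → ↥S2domain)) ⊆ Set.range (g : Fin 3 → ↥S2domain) := by
      rintro m _ ⟨_, rfl⟩; exact ⟨m, rfl⟩
    have hij := hg (ptemb (g i)) (ptemb (g j)) (hrange i) (hrange j)
    have hχ : ∀ a : ↥S2domain, χ (ptemb a) = if simRel ↥S2domain e0 a then 1 else 0 :=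
      fun a => rfl
    rw [hχ, hχ] at hij
    constructor
    · intro h1
      by_contra h2
      rw [if_pos h1, if_neg h2] at hij
      exact absurd hij (by decide)
    · intro h2
      by_contra h1
      rw [if_neg h1, if_pos h2] at hij
      exact absurd hij (by decide)
  by_cases hpos : simRel ↥S2domain e0 (g 0)
  · have hall : ∀ i, 0 < u i ∧ u i < 1/2 := fun i => (hPiff i).mp ((hsame 0 i).mp hpos)
    have l01 : u 0 < u 1 := halfLemma
      (abs_lt.mpr ⟨by linarith [(hall 0).2, (hall 1).1], by linarith [(hall 0).1, (hall 1).2]⟩)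
      e01.1 e01.2
    have l12 : u 1 < u 2 := halfLemma
      (abs_lt.mpr ⟨by linarith [(hall 1).2, (hall 2).1], by linarith [(hall 1).1, (hall 2).2]⟩)
      e12.1 e12.2
    have l20 : u 2 < u 0 := halfLemma
      (abs_lt.mpr ⟨by linarith [(hall 2).2, (hall 0).1], by linarith [(hall 2).1, (hall 0).2]⟩)
      e20.1 e20.2
    linarith
  · have hnall : ∀ i, ¬(0 < u i ∧ u i < 1/2) := by
      intro i hc
      exact hpos ((hsame i 0).mp ((hPiff i).mpr hc))
    have hhalfden : ((1:ℚ)/2).den = 2 := by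
      have h2 := Rat.den_div_eq_of_coprime (a := 1) (b := 2) (by norm_num) (by norm_num)
      rw [show ((1:ℚ)/2) = ((1:ℤ):ℚ)/((2:ℤ):ℚ) by norm_num]
      exact_mod_cast h2
    have hne2 : ∀ i, u i ≠ 1/2 := by
      intro i hi
      have hodd := (hmem i).2.2
      rw [hi, hhalfden] at hodd
      exact (by decide : ¬ Odd 2) hodd
    have htri : ∀ i, u i = 0 ∨ 1/2 < u i := by
      intro i
      rcases eq_or_lt_of_le (hmem i).1 with h0 | h0
      · exact Or.inl h0.symm
      · right
        rcases lt_or_ge (u i) (1/2) with h1 | h1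
        · exact absurd ⟨h0, h1⟩ (hnall i)
        · exact lt_of_le_of_ne h1 (fun hh => hne2 i hh.symm)
    have hz : ∀ i, u i ≠ 0 := by
      have key : ∀ a b : Fin 3, u a = 0 →
          (0 < Int.fract (u b - u a) ∧ Int.fract (u b - u a) < 1/2) → False := by
        intro a b ha hab
        rw [ha, sub_zero, Int.fract_eq_self.mpr ⟨(hmem b).1, (hmem b).2.1⟩] at hab
        exact hnall b hab
      intro i hi
      fin_cases i
      · exact key 0 1 hi e01
      · exact key 1 2 hi e12
      · exact key 2 0 hi e20
    have hup : ∀ i, 1/2 < u i := fun i => (htri i).resolve_left (hz i)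
    have l01 : u 0 < u 1 := halfLemma
      (abs_lt.mpr ⟨by linarith [(hmem 0).2.1, hup 1], by linarith [hup 0, (hmem 1).2.1]⟩)
      e01.1 e01.2
    have l12 : u 1 < u 2 := halfLemma
      (abs_lt.mpr ⟨by linarith [(hmem 1).2.1, hup 2], by linarith [hup 1, (hmem 2).2.1]⟩)
      e12.1 e12.2
    have l20 : u 2 < u 0 := halfLemma
      (abs_lt.mpr ⟨by linarith [(hmem 2).2.1, hup 0], by linarith [hup 2, (hmem 0).2.1]⟩)
      e20.1 e20.2
    linarith

end EDRP
end

section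
/- Let S(3) be the structure in the language L = {R} (one binary relation symbol) with domain ℚ ∩ [0,1), where a R b holds iff (b − a) mod 1 ∈ (0, 1/3). Then S(3) does not have the externally definable Ramsey property: the directed 4-cycle C⃗₄ embeds into S(3), and for any fixed e in the domain, the 2-colouring of points a given by whether e R a holds is externally definable, yet every copy of C⃗₄ in S(3) contains a vertex a with e R a and a vertex b with b R e, so no copy of C⃗₄ is monochromatic. (Proposition 6.7.) -/
open FirstOrder FirstOrder.Language CategoryTheory

universe u v w

namespace EDRP

/-- The domain of the digraph `S(3)`: the rationals in `[0, 1)`. -/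
def S3domain : Set ℚ := {q : ℚ | 0 ≤ q ∧ q < 1}


lemma fract_neg_eq (x : ℚ) (h1 : -1 ≤ x) (h2 : x < 0) : Int.fract x = x + 1 := by
  calc Int.fract x = Int.fract (x + (1:ℤ)) := (Int.fract_add_intCast x 1).symm
    _ = x + ((1:ℤ):ℚ) := Int.fract_eq_self.mpr ⟨by push_cast; linarith, by push_cast; linarith⟩
    _ = x + 1 := by push_cast; ring

lemma fract_cases (x y : ℚ) (hx0 : 0 ≤ x) (hx1 : x < 1) (hy0 : 0 ≤ y) (hy1 : y < 1) :
    Int.fract (y - x) = y - x ∨ Int.fract (y - x) = y - x + 1 := by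
  rcases le_or_gt x y with h | h
  · left; exact Int.fract_eq_self.mpr ⟨by linarith, by linarith⟩
  · right; exact fract_neg_eq _ (by linarith) (by linarith)

def P (x : ℚ) : Prop := 0 < x ∧ x < 1/3

lemma key (a b c d : ℚ) (ha : 0 ≤ a ∧ a < 1) (hb : 0 ≤ b ∧ b < 1)
    (hc : 0 ≤ c ∧ c < 1) (hd : 0 ≤ d ∧ d < 1)
    (h1 : 0 < Int.fract (b - a) ∧ Int.fract (b - a) < 1/3)
    (h2 : 0 < Int.fract (c - b) ∧ Int.fract (c - b) < 1/3)
    (h3 : 0 < Int.fract (d - c) ∧ Int.fract (d - c) < 1/3)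
    (h4 : 0 < Int.fract (a - d) ∧ Int.fract (a - d) < 1/3) :
    ∃ u ∈ ({a, b, c, d} : Set ℚ), P u ∧ ∃ v ∈ ({a, b, c, d} : Set ℚ), ¬ P v := by
  have ma : a ∈ ({a,b,c,d} : Set ℚ) := by simp
  have mb : b ∈ ({a,b,c,d} : Set ℚ) := by simp
  have mc : c ∈ ({a,b,c,d} : Set ℚ) := by simp
  have md : d ∈ ({a,b,c,d} : Set ℚ) := by simp
  obtain ⟨ha0, ha1⟩ := ha; obtain ⟨hb0, hb1⟩ := hb
  obtain ⟨hc0, hc1⟩ := hc; obtain ⟨hd0, hd1⟩ := hd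
  rcases fract_cases a b ha0 ha1 hb0 hb1 with e1 | e1 <;>
  rcases fract_cases b c hb0 hb1 hc0 hc1 with e2 | e2 <;>
  rcases fract_cases c d hc0 hc1 hd0 hd1 with e3 | e3 <;>
  rcases fract_cases d a hd0 hd1 ha0 ha1 with e4 | e4 <;>
  rw [e1] at h1 <;> rw [e2] at h2 <;> rw [e3] at h3 <;> rw [e4] at h4
  · exact absurd rfl (fun _ => by linarith : ¬ (0:ℚ) = 0)
  · by_cases h : 0 < a
    · exact ⟨a, ma, ⟨h, by linarith⟩, d, md, fun hv => by unfold P at hv; linarith⟩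
    · exact ⟨b, mb, ⟨by linarith, by linarith⟩, d, md, fun hv => by unfold P at hv; linarith⟩
  · by_cases h : 0 < d
    · exact ⟨d, md, ⟨h, by linarith⟩, c, mc, fun hv => by unfold P at hv; linarith⟩
    · exact ⟨a, ma, ⟨by linarith, by linarith⟩, c, mc, fun hv => by unfold P at hv; linarith⟩
  · exact absurd rfl (fun _ => by linarith : ¬ (0:ℚ) = 0)
  · by_cases h : 0 < c
    · exact ⟨c, mc, ⟨h, by linarith⟩, b, mb, fun hv => by unfold P at hv; linarith⟩
    · exact ⟨d, md, ⟨by linarith, by linarith⟩, b, mb, fun hv => by unfold P at hv; linarith⟩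
  · exact absurd rfl (fun _ => by linarith : ¬ (0:ℚ) = 0)
  · exact absurd rfl (fun _ => by linarith : ¬ (0:ℚ) = 0)
  · exact absurd rfl (fun _ => by linarith : ¬ (0:ℚ) = 0)
  · by_cases h : 0 < b
    · exact ⟨b, mb, ⟨h, by linarith⟩, a, ma, fun hv => by unfold P at hv; linarith⟩
    · exact ⟨c, mc, ⟨by linarith, by linarith⟩, a, ma, fun hv => by unfold P at hv; linarith⟩
  · exact absurd rfl (fun _ => by linarith : ¬ (0:ℚ) = 0)
  · exact absurd rfl (fun _ => by linarith : ¬ (0:ℚ) = 0)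
  · exact absurd rfl (fun _ => by linarith : ¬ (0:ℚ) = 0)
  · exact absurd rfl (fun _ => by linarith : ¬ (0:ℚ) = 0)
  · exact absurd rfl (fun _ => by linarith : ¬ (0:ℚ) = 0)
  · exact absurd rfl (fun _ => by linarith : ¬ (0:ℚ) = 0)
  · exact absurd rfl (fun _ => by linarith : ¬ (0:ℚ) = 0)

def UnitStr : Language.graph.Structure Unit where
  funMap := fun {_} f _ => f.elim
  RelMap := fun {n} r _ => match n, r with | 2, .adj => False

def C4Str : Language.graph.Structure (Fin 4) where
  funMap := fun {_} f _ => f.elim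
  RelMap := fun {n} r x => match n, r with | 2, .adj => x 1 = x 0 + 1

attribute [local instance] UnitStr C4Str

lemma vec_eq {α β : Type*} (f : α → β) (x : Fin 2 → α) :
    f ∘ x = ![f (x 0), f (x 1)] := by
  funext i; fin_cases i <;> rfl

section
variable [Language.graph.Structure ↥S3domain]

def qpt (i : Fin 4) : ↥S3domain := ⟨(i : ℚ) / 4, by
  constructor
  · positivity
  · have : (i : ℚ) < 4 := by exact_mod_cast i.2
    linarith⟩

def e0 : ↥S3domain := ⟨0, le_refl 0, by norm_num⟩

noncomputable def c4Emb (hstr : ∀ a b : ↥S3domain, simRel ↥S3domain a b ↔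
      (0 < Int.fract ((b : ℚ) - (a : ℚ)) ∧ Int.fract ((b : ℚ) - (a : ℚ)) < 1 / 3)) :
    (Fin 4) ↪[Language.graph] ↥S3domain where
  toFun := qpt
  inj' := by
    intro a b h
    have h2 : (a : ℚ) / 4 = (b : ℚ) / 4 := congrArg Subtype.val h
    have h3 : (a : ℚ) = (b : ℚ) := by linarith
    exact Fin.ext (by exact_mod_cast h3)
  map_rel' := by
    intro n r x
    cases r
    rw [vec_eq]
    show simRel ↥S3domain (qpt (x 0)) (qpt (x 1)) ↔ _
    rw [hstr]
    show _ ↔ x 1 = x 0 + 1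
    have key4 : ∀ a b : Fin 4,
        ((0:ℚ) < Int.fract ((qpt b : ℚ) - (qpt a : ℚ)) ∧
          Int.fract ((qpt b : ℚ) - (qpt a : ℚ)) < 1/3) ↔ b = a + 1 := by
      intro a b
      simp only [qpt]
      fin_cases a <;> fin_cases b <;> norm_num [Int.fract] <;> decide
    exact key4 (x 0) (x 1)

def unitEmb (hstr : ∀ a b : ↥S3domain, simRel ↥S3domain a b ↔
      (0 < Int.fract ((b : ℚ) - (a : ℚ)) ∧ Int.fract ((b : ℚ) - (a : ℚ)) < 1 / 3))
    (m : ↥S3domain) : Unit ↪[Language.graph] ↥S3domain where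
  toFun := fun _ => m
  inj' := fun _ _ _ => rfl
  map_rel' := by
    intro n r x
    cases r
    rw [vec_eq]
    show simRel ↥S3domain m m ↔ False
    rw [hstr]
    simp

open scoped Classical in
noncomputable def chi (f : Unit ↪[Language.graph] ↥S3domain) : Fin 2 :=
  if simRel ↥S3domain e0 (f ()) then 1 else 0

noncomputable def phi : Fin 2 → Language.graph.Formula (Fin 1 ⊕ Unit) :=
  ![(Language.adj.formula₂ (Term.var (Sum.inl 0)) (Term.var (Sum.inr ()))).not,
    Language.adj.formula₂ (Term.var (Sum.inl 0)) (Term.var (Sum.inr ()))]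

lemma chi_spec (f : Unit ↪[Language.graph] ↥S3domain) (i : Fin 2) :
    chi f = i ↔ (phi i).Realize
      (Sum.elim (![e0] : Fin 1 → ↥S3domain) fun a => f a) := by
  have hreal : (Language.adj.formula₂ (Term.var (Sum.inl 0))
      (Term.var (Sum.inr ())) : Language.graph.Formula (Fin 1 ⊕ Unit)).Realize
        (Sum.elim (![e0] : Fin 1 → ↥S3domain) fun a => f a)
      ↔ simRel ↥S3domain e0 (f ()) := by
    rw [Formula.realize_rel₂]
    rfl
  fin_cases i
  · show chi f = 0 ↔ ((Language.adj.formula₂ (Term.var (Sum.inl 0))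
      (Term.var (Sum.inr ()))).not).Realize (Sum.elim (![e0] : Fin 1 → ↥S3domain) fun a => f a)
    rw [Formula.realize_not, hreal]
    unfold chi
    split_ifs with h <;> simp [h]
  · show chi f = 1 ↔ (Language.adj.formula₂ (Term.var (Sum.inl 0))
      (Term.var (Sum.inr ()))).Realize (Sum.elim (![e0] : Fin 1 → ↥S3domain) fun a => f a)
    rw [hreal]
    unfold chi
    split_ifs with h <;> simp [h]

end


/-- **Proposition 6.7.** The digraph `S(3)` — the structure on `ℚ ∩ [0,1)` in the language of
one binary relation `R`, with `a R b` iff `(b - a) mod 1 ∈ (0, 1/3)` — does not have the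
externally definable Ramsey property. -/
theorem s3_not_extDefRamsey [Language.graph.Structure ↥S3domain]
    (hstr : ∀ a b : ↥S3domain, simRel ↥S3domain a b ↔
      (0 < Int.fract ((b : ℚ) - (a : ℚ)) ∧ Int.fract ((b : ℚ) - (a : ℚ)) < 1 / 3)) :
    ¬ ExtDefRamsey Language.graph ↥S3domain := by
  intro H
  obtain ⟨g, hg⟩ := H Unit inferInstance ⟨unitEmb hstr e0⟩ 2 (by norm_num)
    (Fin 4) inferInstance ⟨c4Emb hstr⟩ chi
    ⟨1, phi, ⟨⟨↥S3domain, ‹_›⟩,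
      (Language.Equiv.refl Language.graph ↥S3domain).toElementaryEmbedding, ![e0],
      fun f i => chi_spec f i⟩⟩
  have hrel : ∀ i j : Fin 4, j = i + 1 →
      0 < Int.fract ((g j : ℚ) - (g i : ℚ)) ∧
        Int.fract ((g j : ℚ) - (g i : ℚ)) < 1/3 := by
    intro i j hij
    have h := g.map_rel' Language.adj ![i, j]
    rw [vec_eq] at h
    exact (hstr (g i) (g j)).mp (h.mpr (show ![i,j] 1 = ![i,j] 0 + 1 by simp [hij]))
  obtain ⟨u, hu, hPu, v, hv, hPv⟩ :=
    key ((g 0 : ℚ)) ((g 1 : ℚ)) ((g 2 : ℚ)) ((g 3 : ℚ))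
      (g 0).2 (g 1).2 (g 2).2 (g 3).2
      (hrel 0 1 rfl) (hrel 1 2 rfl) (hrel 2 3 rfl) (hrel 3 0 (by decide))
  have hu' : ∃ i : Fin 4, ((g i : ℚ)) = u := by
    simp only [Set.mem_insert_iff, Set.mem_singleton_iff] at hu
    rcases hu with h | h | h | h
    exacts [⟨0, h.symm⟩, ⟨1, h.symm⟩, ⟨2, h.symm⟩, ⟨3, h.symm⟩]
  have hv' : ∃ i : Fin 4, ((g i : ℚ)) = v := by
    simp only [Set.mem_insert_iff, Set.mem_singleton_iff] at hv
    rcases hv with h | h | h | h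
    exacts [⟨0, h.symm⟩, ⟨1, h.symm⟩, ⟨2, h.symm⟩, ⟨3, h.symm⟩]
  obtain ⟨iu, hiu⟩ := hu'
  obtain ⟨iv, hiv⟩ := hv'
  have hfr : ∀ i : Fin 4, Int.fract ((g i : ℚ) - (e0 : ℚ)) = (g i : ℚ) := by
    intro i
    show Int.fract ((g i : ℚ) - 0) = _
    rw [sub_zero]
    exact Int.fract_eq_self.mpr (g i).2
  have hsu : simRel ↥S3domain e0 (g iu) := by
    refine (hstr _ _).mpr ?_
    rw [hfr, hiu]
    exact hPu
  have hsv : ¬ simRel ↥S3domain e0 (g iv) := by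
    intro hc
    apply hPv
    have h2 := (hstr _ _).mp hc
    rw [hfr, hiv] at h2
    exact h2
  have hm := hg (unitEmb hstr (g iu)) (unitEmb hstr (g iv))
    (by rintro y ⟨_, rfl⟩; exact ⟨iu, rfl⟩) (by rintro y ⟨_, rfl⟩; exact ⟨iv, rfl⟩)
  have h1 : chi (unitEmb hstr (g iu)) = 1 := by unfold chi; exact if_pos hsu
  have h0 : chi (unitEmb hstr (g iv)) = 0 := by unfold chi; exact if_neg hsv
  rw [h1, h0] at hm
  exact absurd hm (by decide)

end EDRP
end
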